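/- arXiv:1804.06111 — 7 statements merged into one kernel-verified Lean document; each statement's English description precedes it below -/
import Mathlib

section
/- Let A ∈ {0,1}^{n×n} be the adjacency matrix of a finite graph in which every node has positive degree, D = diag(d_1,…,d_n) its degree matrix, X ∈ ℝ^{n×d}, W₁ ∈ ℝ^{d×d'}, and W₂ ∈ ℝ^{d'×d'}. If W₂ is entrywise nonnegative and every column sum of W₂ is strictly less than 1 (i.e. max{W₂ᵀ𝐞} < 1), then there exists a unique matrix X̃ ∈ ℝ^{n×d'} satisfying the feature propagation equation X̃ = X W₁ + D^{-1} A X̃ W₂. -/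
open Matrix BigOperators

/-- If `W₂` is entrywise nonnegative with all column sums `< 1`, then the
feature propagation equation `X̃ = X W₁ + D⁻¹ A X̃ W₂` has a unique solution. -/
theorem feature_propagation_unique_solution
    {n d d' : ℕ}
    (A : Matrix (Fin n) (Fin n) ℝ)
    (hA01 : ∀ i j, A i j = 0 ∨ A i j = 1)
    (hdeg : ∀ i, 0 < ∑ j, A i j)
    (X : Matrix (Fin n) (Fin d) ℝ)
    (W₁ : Matrix (Fin d) (Fin d') ℝ)
    (W₂ : Matrix (Fin d') (Fin d') ℝ)
    (hW₂nonneg : ∀ q j, 0 ≤ W₂ q j)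
    (hW₂col : ∀ j, ∑ q, W₂ q j < 1) :
    ∃! Xt : Matrix (Fin n) (Fin d') ℝ,
      Xt = X * W₁ + (Matrix.diagonal fun i => (∑ j, A i j)⁻¹) * A * Xt * W₂ := by
  set P : Matrix (Fin n) (Fin n) ℝ :=
    (Matrix.diagonal fun i => (∑ j, A i j)⁻¹) * A with hPdef
  have hPapp : ∀ i k, P i k = (∑ j, A i j)⁻¹ * A i k := by
    intro i k
    simp [hPdef, Matrix.mul_apply, Matrix.diagonal_apply, Finset.sum_ite_eq]
  have hAnn : ∀ i k, 0 ≤ A i k := by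
    intro i k; rcases hA01 i k with h | h <;> simp [h]
  have hPnn : ∀ i k, 0 ≤ P i k := by
    intro i k
    rw [hPapp]
    exact mul_nonneg (inv_nonneg.mpr (hdeg i).le) (hAnn i k)
  have hProw : ∀ i, ∑ k, P i k = 1 := by
    intro i
    simp only [hPapp]
    rw [← Finset.mul_sum, inv_mul_cancel₀ (hdeg i).ne']
  -- key: if Y = P Y W₂ then Y = 0
  have key : ∀ Y : Matrix (Fin n) (Fin d') ℝ, Y = P * Y * W₂ → Y = 0 := by
    intro Y hY
    by_contra h
    have hne : ∃ p : Fin n × Fin d', Y p.1 p.2 ≠ 0 := by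
      by_contra hc
      push_neg at hc
      exact h (by ext i j; exact hc (i, j))
    obtain ⟨p₀, hp₀⟩ := hne
    obtain ⟨p, -, hpmax⟩ := Finset.exists_max_image Finset.univ
      (fun p : Fin n × Fin d' => |Y p.1 p.2|) ⟨p₀, Finset.mem_univ p₀⟩
    set M := |Y p.1 p.2| with hM
    have hMpos : 0 < M := lt_of_lt_of_le (abs_pos.mpr hp₀) (hpmax p₀ (Finset.mem_univ p₀))
    have hbound : ∀ i q, |(P * Y) i q| ≤ M := by
      intro i q
      calc |(P * Y) i q| = |∑ k, P i k * Y k q| := by rw [Matrix.mul_apply]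
        _ ≤ ∑ k, |P i k * Y k q| := Finset.abs_sum_le_sum_abs _ _
        _ ≤ ∑ k, P i k * M := by
            apply Finset.sum_le_sum
            intro k _
            rw [abs_mul, abs_of_nonneg (hPnn i k)]
            exact mul_le_mul_of_nonneg_left (hpmax (k, q) (Finset.mem_univ _)) (hPnn i k)
        _ = M := by rw [← Finset.sum_mul, hProw, one_mul]
    have : M < M := by
      calc M = |(P * Y * W₂) p.1 p.2| := by rw [hM, ← hY]
        _ = |∑ q, (P * Y) p.1 q * W₂ q p.2| := by rw [Matrix.mul_apply]
        _ ≤ ∑ q, |(P * Y) p.1 q * W₂ q p.2| := Finset.abs_sum_le_sum_abs _ _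
        _ ≤ ∑ q, M * W₂ q p.2 := by
            apply Finset.sum_le_sum
            intro q _
            rw [abs_mul, abs_of_nonneg (hW₂nonneg q p.2)]
            exact mul_le_mul_of_nonneg_right (hbound p.1 q) (hW₂nonneg q p.2)
        _ = M * ∑ q, W₂ q p.2 := by rw [Finset.mul_sum]
        _ < M * 1 := by exact mul_lt_mul_of_pos_left (hW₂col p.2) hMpos
        _ = M := mul_one M
    exact lt_irrefl M this
  -- linear map f Y = Y - P * Y * W₂
  let f : Matrix (Fin n) (Fin d') ℝ →ₗ[ℝ] Matrix (Fin n) (Fin d') ℝ :=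
    { toFun := fun Y => Y - P * Y * W₂
      map_add' := by
        intro a b
        simp [Matrix.mul_add, Matrix.add_mul]
        abel
      map_smul' := by
        intro c a
        simp [Matrix.mul_smul, Matrix.smul_mul, smul_sub] }
  have hinj : Function.Injective f := by
    rw [injective_iff_map_eq_zero]
    intro Y hY
    apply key
    have : Y - P * Y * W₂ = 0 := hY
    exact sub_eq_zero.mp this
  have hsurj : Function.Surjective f := LinearMap.injective_iff_surjective.mp hinj
  obtain ⟨Xt, hXt⟩ := hsurj (X * W₁)
  have hXt' : Xt = X * W₁ + P * Xt * W₂ := by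
    have : Xt - P * Xt * W₂ = X * W₁ := hXt
    rw [← this]; abel
  refine ⟨Xt, hXt', ?_⟩
  intro y hy
  have hdiff : y - Xt = P * (y - Xt) * W₂ := by
    rw [Matrix.mul_sub, Matrix.sub_mul]
    calc y - Xt = (X * W₁ + P * y * W₂) - (X * W₁ + P * Xt * W₂) := by
          rw [← hy, ← hXt']
      _ = P * y * W₂ - P * Xt * W₂ := by abel
  have := key _ hdiff
  have : y - Xt = 0 := this
  exact sub_eq_zero.mp this
end

section
/- Let A ∈ {0,1}^{n×n} be the adjacency matrix of a finite graph in which every node has positive degree, D its degree matrix, X ∈ ℝ^{n×d}, W₁ ∈ ℝ^{d×d'}, and W₂ ∈ ℝ^{d'×d'} entrywise nonnegative with every column sum strictly less than 1. Then for any initial matrix X^{(0)} ∈ ℝ^{n×d'}, the iteration X^{(t+1)} = X W₁ + D^{-1} A X^{(t)} W₂ converges (entrywise, as t → ∞) to the unique fixed point X̃ of the equation X̃ = X W₁ + D^{-1} A X̃ W₂. -/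
/-!
`D⁻¹A` is row-stochastic, so left multiplication by it does not increase the entrywise sup norm,
while right multiplication by the nonnegative `W₂` scales that norm by at most the largest column
sum of `W₂`, which is `< 1`. Hence `Z ↦ X W₁ + D⁻¹ A Z W₂` is a contraction of the complete space
of `n × d'` matrices, and the Banach fixed point theorem gives the unique fixed point together
with the convergence of the iteration from every starting matrix.
-/

open Matrix BigOperators Filter Topology

open scoped NNReal

attribute [local instance] Matrix.seminormedAddCommGroup Matrix.normedAddCommGroup

namespace Matrix

section SupNorm

variable {l m n : Type*} [Fintype l] [Fintype m] [Fintype n] {α : Type*}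
  [NonUnitalSeminormedRing α]

theorem nnnorm_mul_le_of_sum_row_le {A : Matrix l m α} {c : ℝ≥0}
    (hA : ∀ i, ∑ k, ‖A i k‖₊ ≤ c) (B : Matrix m n α) : ‖A * B‖₊ ≤ c * ‖B‖₊ :=
  nnnorm_le_iff.2 fun i j =>
    calc ‖(A * B) i j‖₊ ≤ ∑ k, ‖A i k‖₊ * ‖B k j‖₊ :=
          (nnnorm_sum_le _ _).trans (Finset.sum_le_sum fun k _ => nnnorm_mul_le _ _)
      _ ≤ ∑ k, ‖A i k‖₊ * ‖B‖₊ := by gcongr; exact nnnorm_entry_le_entrywise_sup_nnnorm B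
      _ ≤ c * ‖B‖₊ := by rw [← Finset.sum_mul]; gcongr; exact hA i

theorem nnnorm_mul_le_of_sum_col_le {B : Matrix m n α} {c : ℝ≥0}
    (hB : ∀ j, ∑ k, ‖B k j‖₊ ≤ c) (A : Matrix l m α) : ‖A * B‖₊ ≤ c * ‖A‖₊ :=
  nnnorm_le_iff.2 fun i j =>
    calc ‖(A * B) i j‖₊ ≤ ∑ k, ‖A i k‖₊ * ‖B k j‖₊ :=
          (nnnorm_sum_le _ _).trans (Finset.sum_le_sum fun k _ => nnnorm_mul_le _ _)
      _ ≤ ∑ k, ‖A‖₊ * ‖B k j‖₊ := by gcongr; exact nnnorm_entry_le_entrywise_sup_nnnorm A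
      _ ≤ c * ‖A‖₊ := by rw [← Finset.mul_sum, mul_comm]; gcongr; exact hB j

end SupNorm

theorem diagonal_inv_sum_row_mul_mem_rowStochastic {R n : Type*} [Fintype n] [DecidableEq n]
    [Field R] [LinearOrder R] [IsStrictOrderedRing R] {A : Matrix n n R}
    (hA : ∀ i j, 0 ≤ A i j) (hrow : ∀ i, 0 < ∑ j, A i j) :
    diagonal (fun i => (∑ j, A i j)⁻¹) * A ∈ rowStochastic R n := by
  refine mem_rowStochastic_iff_sum.2 ⟨fun i j => ?_, fun i => ?_⟩
  · simpa [diagonal_mul] using mul_nonneg (inv_nonneg.2 (hrow i).le) (hA i j)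
  · simp only [diagonal_mul, ← Finset.mul_sum]
    exact inv_mul_cancel₀ (hrow i).ne'

variable {m n : Type*} [Fintype m] [DecidableEq m] [Fintype n]

theorem nnnorm_mul_le_of_mem_rowStochastic {P : Matrix m m ℝ} (hP : P ∈ rowStochastic ℝ m)
    (B : Matrix m n ℝ) : ‖P * B‖₊ ≤ ‖B‖₊ := by
  have hrow (i : m) : ∑ k, ‖P i k‖₊ = 1 := by
    rw [← NNReal.coe_inj]
    push_cast
    simp only [Real.norm_of_nonneg (nonneg_of_mem_rowStochastic hP)]
    exact sum_row_of_mem_rowStochastic hP i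
  simpa using nnnorm_mul_le_of_sum_row_le (fun i => (hrow i).le) B

theorem contractingWith_add_mul_mul (B : Matrix m n ℝ) {P : Matrix m m ℝ}
    (hP : P ∈ rowStochastic ℝ m) {W : Matrix n n ℝ} (hW : ∀ j, ∑ q, ‖W q j‖₊ < 1) :
    ContractingWith (Finset.univ.sup fun j => ∑ q, ‖W q j‖₊)
      (fun Z : Matrix m n ℝ => B + P * Z * W) := by
  set K := Finset.univ.sup fun j => ∑ q, ‖W q j‖₊
  refine ⟨(Finset.sup_lt_iff zero_lt_one).2 fun j _ => hW j,
    LipschitzWith.of_dist_le_mul fun Z Y => ?_⟩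
  have hWK (j : n) : ∑ q, ‖W q j‖₊ ≤ K :=
    Finset.le_sup (f := fun j => ∑ q, ‖W q j‖₊) (Finset.mem_univ j)
  have key : ‖(B + P * Z * W) - (B + P * Y * W)‖₊ ≤ K * ‖Z - Y‖₊ := by
    rw [add_sub_add_left_eq_sub, ← Matrix.sub_mul, ← Matrix.mul_sub]
    calc _ ≤ K * ‖P * (Z - Y)‖₊ := nnnorm_mul_le_of_sum_col_le hWK _
      _ ≤ K * ‖Z - Y‖₊ := by gcongr; exact nnnorm_mul_le_of_mem_rowStochastic hP _
  simpa [dist_eq_norm] using NNReal.coe_le_coe.2 key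

end Matrix

/-- Under the convergence conditions on `W₂`, the iteration
`X^{(t+1)} = X W₁ + D⁻¹ A X^{(t)} W₂` converges entrywise, from any initial matrix,
to the unique fixed point of the feature propagation equation. -/
theorem feature_propagation_iteration_converges
    {n d d' : ℕ}
    (A : Matrix (Fin n) (Fin n) ℝ)
    (hA01 : ∀ i j, A i j = 0 ∨ A i j = 1)
    (hdeg : ∀ i, 0 < ∑ j, A i j)
    (X : Matrix (Fin n) (Fin d) ℝ)
    (W₁ : Matrix (Fin d) (Fin d') ℝ)
    (W₂ : Matrix (Fin d') (Fin d') ℝ)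
    (hW₂nonneg : ∀ q j, 0 ≤ W₂ q j)
    (hW₂col : ∀ j, ∑ q, W₂ q j < 1) :
    ∃ Xt : Matrix (Fin n) (Fin d') ℝ,
      (Xt = X * W₁ + (Matrix.diagonal fun i => (∑ j, A i j)⁻¹) * A * Xt * W₂) ∧
      (∀ Y : Matrix (Fin n) (Fin d') ℝ,
        Y = X * W₁ + (Matrix.diagonal fun i => (∑ j, A i j)⁻¹) * A * Y * W₂ → Y = Xt) ∧
      (∀ X0 : Matrix (Fin n) (Fin d') ℝ,
        Tendsto
          (fun t => (fun Z : Matrix (Fin n) (Fin d') ℝ =>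
            X * W₁ + (Matrix.diagonal fun i => (∑ j, A i j)⁻¹) * A * Z * W₂)^[t] X0)
          atTop (𝓝 Xt)) := by
  have hA (i j) : 0 ≤ A i j := by rcases hA01 i j with h | h <;> simp [h]
  have hW (j : Fin d') : ∑ q, ‖W₂ q j‖₊ < 1 := by
    rw [← NNReal.coe_lt_coe]
    push_cast
    simpa only [Real.norm_of_nonneg (hW₂nonneg _ j)] using hW₂col j
  -- The sup-norm uniformity is not syntactically `Matrix.instUniformSpace`, so completeness
  -- is transferred from the product space by hand.
  have : @CompleteSpace (Matrix (Fin n) (Fin d') ℝ) PseudoMetricSpace.toUniformSpace :=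
    inferInstanceAs (CompleteSpace (Fin n → Fin d' → ℝ))
  have hf := contractingWith_add_mul_mul (X * W₁)
    (diagonal_inv_sum_row_mul_mem_rowStochastic hA hdeg) hW
  exact ⟨hf.fixedPoint _, hf.fixedPoint_isFixedPt.symm, fun Y hY => hf.fixedPoint_unique hY.symm,
    hf.tendsto_iterate_fixedPoint⟩
end

section
/- Let A ∈ {0,1}^{n×n} be the adjacency matrix of a finite graph, with degrees d_i = ∑_j A_{ij} and maximum degree d_max = max_i d_i ≥ 1. Let X ∈ ℝ^{n×d}, W₁ ∈ ℝ^{d×d'}, and W₂ ∈ ℝ^{d'×d'} be entrywise nonnegative with every column sum of W₂ strictly less than 1/d_max. Then there exists a unique matrix X̃ ∈ ℝ^{n×d'} satisfying the unnormalized feature propagation equation X̃ = X W₁ + A X̃ W₂. -/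
open Matrix BigOperators

/-- If every column sum of the nonnegative matrix `W₂` is strictly less than
`1 / d_max`, the unnormalized feature propagation equation `X̃ = X W₁ + A X̃ W₂` has a
unique solution. -/
theorem unnormalized_feature_propagation_unique_solution
    {n d d' : ℕ}
    (A : Matrix (Fin n) (Fin n) ℝ)
    (hA01 : ∀ i j, A i j = 0 ∨ A i j = 1)
    (dmax : ℝ) (hdmax : dmax = ⨆ i, ∑ j, A i j) (hdmax1 : 1 ≤ dmax)
    (X : Matrix (Fin n) (Fin d) ℝ)
    (W₁ : Matrix (Fin d) (Fin d') ℝ)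
    (W₂ : Matrix (Fin d') (Fin d') ℝ)
    (hW₂nonneg : ∀ q j, 0 ≤ W₂ q j)
    (hW₂col : ∀ j, ∑ q, W₂ q j < 1 / dmax) :
    ∃! Xt : Matrix (Fin n) (Fin d') ℝ, Xt = X * W₁ + A * Xt * W₂ := by
  have hdpos : (0:ℝ) < dmax := lt_of_lt_of_le zero_lt_one hdmax1
  have hAnonneg : ∀ i j, 0 ≤ A i j := by
    intro i j; rcases hA01 i j with h | h <;> simp [h]
  -- key contraction inequality leading to injectivity of Y ↦ Y - A*Y*W₂
  have hker : ∀ Y : Matrix (Fin n) (Fin d') ℝ, Y = A * Y * W₂ → Y = 0 := by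
    intro Y hY
    ext i j
    obtain ⟨p, -, hp⟩ := Finset.exists_max_image (Finset.univ : Finset (Fin n × Fin d'))
      (fun p => |Y p.1 p.2|) ⟨(i, j), Finset.mem_univ _⟩
    set M := |Y p.1 p.2| with hM
    have hMnonneg : 0 ≤ M := abs_nonneg _
    have hle : ∀ k q, |Y k q| ≤ M := fun k q => hp (k, q) (Finset.mem_univ _)
    -- degree bound
    have hdeg : ∀ k : Fin n, ∑ l, A k l ≤ dmax := by
      intro k
      rw [hdmax]
      exact le_ciSup (f := fun i => ∑ j, A i j) (Set.Finite.bddAbove (Set.finite_range _)) k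
    have hbound : M ≤ dmax * (∑ q, W₂ q p.2) * M := by
      calc M = |(A * Y * W₂) p.1 p.2| := by rw [hM, ← hY]
        _ = |∑ q, (A * Y) p.1 q * W₂ q p.2| := by rw [Matrix.mul_apply]
        _ ≤ ∑ q, |(A * Y) p.1 q * W₂ q p.2| := Finset.abs_sum_le_sum_abs _ _
        _ ≤ ∑ q, (dmax * M) * W₂ q p.2 := by
            apply Finset.sum_le_sum
            intro q _
            rw [abs_mul, abs_of_nonneg (hW₂nonneg q p.2)]
            apply mul_le_mul_of_nonneg_right _ (hW₂nonneg q p.2)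
            calc |(A * Y) p.1 q| = |∑ k, A p.1 k * Y k q| := by rw [Matrix.mul_apply]
              _ ≤ ∑ k, |A p.1 k * Y k q| := Finset.abs_sum_le_sum_abs _ _
              _ ≤ ∑ k, A p.1 k * M := by
                  apply Finset.sum_le_sum
                  intro k _
                  rw [abs_mul, abs_of_nonneg (hAnonneg p.1 k)]
                  exact mul_le_mul_of_nonneg_left (hle k q) (hAnonneg p.1 k)
              _ = (∑ k, A p.1 k) * M := by rw [← Finset.sum_mul]
              _ ≤ dmax * M := mul_le_mul_of_nonneg_right (hdeg p.1) hMnonneg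
        _ = dmax * (∑ q, W₂ q p.2) * M := by
            rw [← Finset.mul_sum]; ring
    have hcontr : dmax * (∑ q, W₂ q p.2) < 1 := by
      have := hW₂col p.2
      calc dmax * (∑ q, W₂ q p.2) < dmax * (1 / dmax) :=
            mul_lt_mul_of_pos_left this hdpos
        _ = 1 := by field_simp
    have hM0 : M ≤ 0 := by
      by_contra h
      push_neg at h
      have : dmax * (∑ q, W₂ q p.2) * M < 1 * M :=
        mul_lt_mul_of_pos_right hcontr h
      rw [one_mul] at this
      linarith
    have : |Y i j| ≤ 0 := le_trans (hle i j) hM0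
    have : |Y i j| = 0 := le_antisymm this (abs_nonneg _)
    simpa using this
  -- the linear map Y ↦ Y - A * Y * W₂
  let f : Matrix (Fin n) (Fin d') ℝ →ₗ[ℝ] Matrix (Fin n) (Fin d') ℝ :=
    { toFun := fun Y => Y - A * Y * W₂
      map_add' := by
        intro Y Z
        simp [Matrix.mul_add, Matrix.add_mul]
        abel
      map_smul' := by
        intro c Y
        simp [Matrix.mul_smul, Matrix.smul_mul, smul_sub] }
  have hinj : Function.Injective f := by
    rw [← LinearMap.ker_eq_bot, LinearMap.ker_eq_bot']
    intro Y hY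
    have h0 : Y - A * Y * W₂ = 0 := hY
    exact hker Y (sub_eq_zero.mp h0)
  have hsurj : Function.Surjective f := LinearMap.injective_iff_surjective.mp hinj
  obtain ⟨Y, hYeq⟩ := hsurj (X * W₁)
  refine ⟨Y, ?_, ?_⟩
  · have h1 : Y - A * Y * W₂ = X * W₁ := hYeq
    exact sub_eq_iff_eq_add.mp (show Y - A * Y * W₂ = X * W₁ from hYeq)
  · intro Z hZ
    apply hinj
    show Z - A * Z * W₂ = Y - A * Y * W₂
    have h2 : Y - A * Y * W₂ = X * W₁ := hYeq
    rw [h2]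
    exact sub_eq_iff_eq_add.mpr hZ
end

section
/- Let A ∈ {0,1}^{n×n} be the adjacency matrix of a finite graph in which every node has positive degree, D its degree matrix, T = D^{-1}A, X ∈ ℝ^{n×d}, W₁ ∈ ℝ^{d×d'}, and W₂ ∈ ℝ^{d'×d'} entrywise nonnegative with every column sum strictly less than 1. Then the matrix series ∑_{k=0}^∞ T^k X W₁ W₂^k converges entrywise, and its sum is the unique solution X̃ of the feature propagation equation X̃ = X W₁ + T X̃ W₂. -/
/-!
For the entrywise sup norm, `M ↦ T * M * W₂` is a contraction: `T` is row-stochastic, so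
left multiplication by it does not increase the norm, and right multiplication by `W₂` scales
it by at most the largest column sum `ρ < 1`. Hence the `k`-th term of the series is
`O(ρ ^ k)`, shifting the index shows that its sum solves `X̃ = X W₁ + T X̃ W₂`, and the
difference of two solutions is a fixed point of the contraction, hence zero.
-/

open Matrix BigOperators

attribute [local instance] Matrix.seminormedAddCommGroup Matrix.normedAddCommGroup
  Matrix.normedSpace

theorem exists_between_forall_le_of_forall_lt {ι α : Type*} [Finite ι] [LinearOrder α]
    {f : ι → α} {a b : α} (hf : ∀ i, f i < a) (hb : b < a) :
    ∃ c, b ≤ c ∧ c < a ∧ ∀ i, f i ≤ c := by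
  -- adjoining `b` as `none` makes the maximum exist also for empty `ι`
  obtain ⟨o, ho⟩ := Finite.exists_max fun o : Option ι => o.elim b f
  refine ⟨o.elim b f, ho none, ?_, fun i => ho (some i)⟩
  cases o with
  | none => exact hb
  | some i => exact hf i

theorem HasSum.eq_add_apply_of_iterate {E : Type*} [AddCommGroup E] [TopologicalSpace E]
    [IsTopologicalAddGroup E] [T2Space E] {f : E →+ E} (hf : Continuous f) {b S : E}
    (hS : HasSum (fun k => f^[k] b) S) : S = b + f S := by
  have hshift : HasSum (fun k => f^[k + 1] b) (f S) := by
    simpa only [Function.comp_def, Function.iterate_succ_apply'] using hS.map f hf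
  have := (hasSum_nat_add_iff' 1).2 hS
  simp only [Finset.range_one, Finset.sum_singleton, Function.iterate_zero_apply] at this
  rw [hshift.unique this]
  abel

section Contraction

variable {E : Type*} [NormedAddCommGroup E] {f : E → E} {ρ : ℝ}

theorem norm_iterate_le_of_norm_le (hρ : 0 ≤ ρ) (hf : ∀ x, ‖f x‖ ≤ ρ * ‖x‖) (x : E) (k : ℕ) :
    ‖f^[k] x‖ ≤ ρ ^ k * ‖x‖ := by
  induction k with
  | zero => simp
  | succ k ih =>
    rw [Function.iterate_succ_apply', pow_succ', mul_assoc]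
    exact (hf _).trans (mul_le_mul_of_nonneg_left ih hρ)

theorem summable_iterate_of_norm_le [CompleteSpace E] (hρ₀ : 0 ≤ ρ) (hρ₁ : ρ < 1)
    (hf : ∀ x, ‖f x‖ ≤ ρ * ‖x‖) (x : E) : Summable fun k => f^[k] x :=
  .of_norm_bounded ((summable_geometric_of_lt_one hρ₀ hρ₁).mul_right ‖x‖)
    (norm_iterate_le_of_norm_le hρ₀ hf x)

theorem AddMonoidHom.eq_of_eq_add_apply_of_norm_le {g : E →+ E} (hρ : ρ < 1)
    (hg : ∀ x, ‖g x‖ ≤ ρ * ‖x‖) {b y z : E} (hy : y = b + g y) (hz : z = b + g z) : y = z := by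
  have hfix : y - z = g (y - z) := by
    rw [map_sub]; nth_rw 1 [hy, hz]; abel
  have hle : ‖y - z‖ ≤ ρ * ‖y - z‖ := by
    conv_lhs => rw [hfix]
    exact hg (y - z)
  have : ‖y - z‖ = 0 := by nlinarith [norm_nonneg (y - z)]
  exact sub_eq_zero.1 (norm_eq_zero.1 this)

end Contraction

namespace Matrix

variable {l m n p R : Type*} [Fintype l] [Fintype m] [Fintype n]

theorem norm_mul_le_of_row_sum_norm_le [NonUnitalSeminormedRing R] (T : Matrix l m R)
    (M : Matrix m n R) {α : ℝ} (hα : 0 ≤ α) (hT : ∀ i, ∑ k, ‖T i k‖ ≤ α) :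
    ‖T * M‖ ≤ α * ‖M‖ := by
  refine (norm_le_iff (by positivity)).2 fun i j => ?_
  calc ‖(T * M) i j‖ ≤ ∑ k, ‖T i k‖ * ‖M k j‖ :=
        (norm_sum_le _ _).trans (Finset.sum_le_sum fun k _ => norm_mul_le _ _)
    _ ≤ ∑ k, ‖T i k‖ * ‖M‖ :=
        Finset.sum_le_sum fun k _ => by gcongr; exact norm_entry_le_entrywise_sup_norm M
    _ ≤ α * ‖M‖ := by rw [← Finset.sum_mul]; gcongr; exact hT i

theorem norm_mul_le_of_col_sum_norm_le [SeminormedCommRing R] (M : Matrix l m R)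
    (W : Matrix m n R) {β : ℝ} (hβ : 0 ≤ β) (hW : ∀ j, ∑ k, ‖W k j‖ ≤ β) :
    ‖M * W‖ ≤ β * ‖M‖ := by
  rw [← norm_transpose, transpose_mul, ← norm_transpose M]
  exact norm_mul_le_of_row_sum_norm_le Wᵀ Mᵀ hβ hW

def mulLeftRightAddMonoidHom [NonUnitalNonAssocSemiring R] (T : Matrix l m R)
    (W : Matrix n p R) : Matrix m n R →+ Matrix l p R where
  toFun M := T * M * W
  map_zero' := by rw [Matrix.mul_zero, Matrix.zero_mul]
  map_add' M N := by rw [Matrix.mul_add, Matrix.add_mul]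

theorem mulLeftRightAddMonoidHom_iterate_apply [Semiring R] [DecidableEq m] [DecidableEq n]
    (T : Matrix m m R) (W : Matrix n n R) (k : ℕ) (M : Matrix m n R) :
    (mulLeftRightAddMonoidHom T W)^[k] M = T ^ k * M * W ^ k := by
  induction k with
  | zero => simp
  | succ k ih =>
    rw [Function.iterate_succ_apply', ih, pow_succ', pow_succ]
    simp only [mulLeftRightAddMonoidHom, AddMonoidHom.coe_mk, ZeroHom.coe_mk, Matrix.mul_assoc]

theorem norm_mulLeftRightAddMonoidHom_apply_le [Fintype p] [SeminormedCommRing R]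
    (T : Matrix l m R) (W : Matrix n p R) {α β : ℝ} (hα : 0 ≤ α) (hβ : 0 ≤ β) (hT : ∀ i, ∑ k, ‖T i k‖ ≤ α)
    (hW : ∀ j, ∑ k, ‖W k j‖ ≤ β) (M : Matrix m n R) :
    ‖mulLeftRightAddMonoidHom T W M‖ ≤ α * β * ‖M‖ :=
  calc ‖T * M * W‖ ≤ β * ‖T * M‖ := norm_mul_le_of_col_sum_norm_le _ W hβ hW
    _ ≤ β * (α * ‖M‖) := by gcongr; exact norm_mul_le_of_row_sum_norm_le T M hα hT
    _ = α * β * ‖M‖ := by ring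

theorem sum_norm_diagonal_inv_sum_mul_eq_one [DecidableEq m] {A : Matrix m n ℝ}
    (hA : ∀ i j, 0 ≤ A i j) (hpos : ∀ i, 0 < ∑ j, A i j) (i : m) :
    ∑ j, ‖(diagonal (fun i => (∑ j, A i j)⁻¹) * A) i j‖ = 1 := by
  simp_rw [diagonal_mul, norm_mul, Real.norm_of_nonneg (hA i _),
    Real.norm_of_nonneg (inv_nonneg.2 (hpos i).le), ← Finset.mul_sum]
  exact inv_mul_cancel₀ (hpos i).ne'

end Matrix

/-- With `T = D⁻¹ A` and `W₂` nonnegative with column sums `< 1`, the series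
`∑ T^k X W₁ W₂^k` converges entrywise and its sum is the unique solution of the feature
propagation equation `X̃ = X W₁ + T X̃ W₂`. -/
theorem feature_propagation_series_solution
    {n d d' : ℕ}
    (A : Matrix (Fin n) (Fin n) ℝ)
    (hA01 : ∀ i j, A i j = 0 ∨ A i j = 1)
    (hdeg : ∀ i, 0 < ∑ j, A i j)
    (T : Matrix (Fin n) (Fin n) ℝ)
    (hT : T = (Matrix.diagonal fun i => (∑ j, A i j)⁻¹) * A)
    (X : Matrix (Fin n) (Fin d) ℝ)
    (W₁ : Matrix (Fin d) (Fin d') ℝ)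
    (W₂ : Matrix (Fin d') (Fin d') ℝ)
    (hW₂nonneg : ∀ q j, 0 ≤ W₂ q j)
    (hW₂col : ∀ j, ∑ q, W₂ q j < 1) :
    ∃ S : Matrix (Fin n) (Fin d') ℝ,
      HasSum (fun k : ℕ => T ^ k * (X * W₁) * W₂ ^ k) S ∧
      S = X * W₁ + T * S * W₂ ∧
      ∀ Y : Matrix (Fin n) (Fin d') ℝ, Y = X * W₁ + T * Y * W₂ → Y = S := by
  have hA : ∀ i j, 0 ≤ A i j := fun i j => by rcases hA01 i j with h | h <;> simp [h]
  have hT₁ : ∀ i, ∑ j, ‖T i j‖ ≤ 1 := fun i =>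
    (hT ▸ Matrix.sum_norm_diagonal_inv_sum_mul_eq_one hA hdeg i).le
  obtain ⟨ρ, hρ₀, hρ₁, hρ⟩ := exists_between_forall_le_of_forall_lt hW₂col zero_lt_one
  have hW₂ : ∀ j, ∑ q, ‖W₂ q j‖ ≤ ρ := fun j => by
    simpa only [Real.norm_of_nonneg (hW₂nonneg _ j)] using hρ j
  let L := Matrix.mulLeftRightAddMonoidHom T W₂
  have hL : ∀ M, ‖L M‖ ≤ ρ * ‖M‖ := fun M => by
    simpa only [one_mul] using
      Matrix.norm_mulLeftRightAddMonoidHom_apply_le T W₂ zero_le_one hρ₀ hT₁ hW₂ M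
  -- `Matrix.instCompleteSpace` is stated for the product uniformity, not the one of the norm
  have := FiniteDimensional.complete ℝ (Matrix (Fin n) (Fin d') ℝ)
  have hS := (summable_iterate_of_norm_le hρ₀ hρ₁ hL (X * W₁)).hasSum
  have hfix := hS.eq_add_apply_of_iterate (AddMonoidHomClass.continuous_of_bound L ρ hL)
  have hiter : (fun k => L^[k] (X * W₁)) = fun k => T ^ k * (X * W₁) * W₂ ^ k :=
    funext fun k => Matrix.mulLeftRightAddMonoidHom_iterate_apply T W₂ k _
  exact ⟨_, hiter ▸ hS, hfix, fun Y hY => L.eq_of_eq_add_apply_of_norm_le hρ₁ hL hY hfix⟩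
end

section
/- Let A ∈ {0,1}^{n×n} be the adjacency matrix of a finite graph with degrees d_i = ∑_j A_{ij} and maximum degree d_max ≥ 1, let C ∈ ℝ^{n×d'}, and let W₂ ∈ ℝ^{d'×d'} be entrywise nonnegative with every column sum strictly less than 1/d_max. Define F : ℝ^{n×d'} → ℝ^{n×d'} by F(M) = σ(C + A M W₂), where σ is the entrywise rectified linear unit σ(x) = max{0, x}. Then F is a strict contraction in the entrywise maximum norm (with contraction constant d_max · max_j ∑_q (W₂)_{qj} < 1), and hence F has a unique fixed point M̃ ∈ ℝ^{n×d'} satisfying M̃ = σ(C + A M̃ W₂). -/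
open Matrix BigOperators

/-- The structure2vec-type map `F(M) = σ(C + A M W₂)` (with `σ` the
entrywise ReLU) is a strict contraction in the entrywise maximum norm with contraction
constant `d_max · max_j ∑_q (W₂)_{qj} < 1`, and hence has a unique fixed point. -/
theorem relu_propagation_contraction_unique_fixed_point
    {n d' : ℕ}
    (A : Matrix (Fin n) (Fin n) ℝ)
    (hA01 : ∀ i j, A i j = 0 ∨ A i j = 1)
    (dmax : ℝ) (hdmax : dmax = ⨆ i, ∑ j, A i j) (hdmax1 : 1 ≤ dmax)
    (C : Matrix (Fin n) (Fin d') ℝ)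
    (W₂ : Matrix (Fin d') (Fin d') ℝ)
    (hW₂nonneg : ∀ q j, 0 ≤ W₂ q j)
    (hW₂col : ∀ j, ∑ q, W₂ q j < 1 / dmax)
    (F : Matrix (Fin n) (Fin d') ℝ → Matrix (Fin n) (Fin d') ℝ)
    (hF : F = fun M => fun i j => max 0 ((C + A * M * W₂) i j)) :
    (dmax * (⨆ j, ∑ q, W₂ q j) < 1) ∧
    (∀ M₁ M₂ : Matrix (Fin n) (Fin d') ℝ,
      (⨆ i, ⨆ j, |(F M₁ - F M₂) i j|)
        ≤ (dmax * (⨆ j, ∑ q, W₂ q j)) * (⨆ i, ⨆ j, |(M₁ - M₂) i j|)) ∧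
    (∃! M : Matrix (Fin n) (Fin d') ℝ, M = F M) := by
  have hdpos : (0:ℝ) < dmax := lt_of_lt_of_le one_pos hdmax1
  -- n is nonempty
  have hn : Nonempty (Fin n) := by
    rcases Nat.eq_zero_or_pos n with h0 | hpos
    · exfalso
      subst h0
      rw [Real.iSup_of_isEmpty] at hdmax
      linarith
    · exact ⟨⟨0, hpos⟩⟩
  set supW : ℝ := ⨆ j, ∑ q, W₂ q j with hsupW
  -- nonnegativity of A entries
  have hAnn : ∀ i j, 0 ≤ A i j := by
    intro i j; rcases hA01 i j with h | h <;> rw [h] <;> norm_num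
  -- row sums bounded by dmax
  have hrow : ∀ i, ∑ j, A i j ≤ dmax := by
    intro i
    rw [hdmax]
    exact le_ciSup (f := fun i => ∑ j, A i j) (Set.Finite.bddAbove (Set.finite_range _)) i
  have hsupW_nonneg : 0 ≤ supW := by
    rcases isEmpty_or_nonempty (Fin d') with hd | hd
    · rw [hsupW, Real.iSup_of_isEmpty]
    · obtain ⟨j⟩ := hd
      have h1 : (0:ℝ) ≤ ∑ q, W₂ q j := Finset.sum_nonneg fun q _ => hW₂nonneg q j
      exact le_trans h1 (le_ciSup (f := fun j => ∑ q, W₂ q j)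
        (Set.Finite.bddAbove (Set.finite_range _)) j)
  have hcol_le : ∀ j, ∑ q, W₂ q j ≤ supW := by
    intro j
    exact le_ciSup (f := fun j => ∑ q, W₂ q j)
      (Set.Finite.bddAbove (Set.finite_range _)) j
  set K : ℝ := dmax * supW with hK
  have hKnn : 0 ≤ K := mul_nonneg hdpos.le hsupW_nonneg
  -- K < 1
  have hK1 : K < 1 := by
    rcases isEmpty_or_nonempty (Fin d') with hd | hd
    · rw [hK, hsupW, Real.iSup_of_isEmpty, mul_zero]; norm_num
    · obtain ⟨j₀, hj₀⟩ := Finite.exists_max (fun j => ∑ q, W₂ q j)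
      have hsup_le : supW ≤ ∑ q, W₂ q j₀ := ciSup_le hj₀
      have : supW < 1 / dmax := lt_of_le_of_lt hsup_le (hW₂col j₀)
      calc K = dmax * supW := rfl
        _ < dmax * (1 / dmax) := by exact mul_lt_mul_of_pos_left this hdpos
        _ = 1 := by field_simp
  -- key per-entry bound
  have key : ∀ (B : ℝ), 0 ≤ B → ∀ (M₁ M₂ : Matrix (Fin n) (Fin d') ℝ),
      (∀ k q, |M₁ k q - M₂ k q| ≤ B) →
      ∀ i j, |F M₁ i j - F M₂ i j| ≤ K * B := by
    intro B hB M₁ M₂ hMB i j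
    subst hF
    simp only
    have h1 : |max 0 ((C + A * M₁ * W₂) i j) - max 0 ((C + A * M₂ * W₂) i j)|
        ≤ |(C + A * M₁ * W₂) i j - (C + A * M₂ * W₂) i j| := by
      rw [max_comm 0 ((C + A * M₁ * W₂) i j), max_comm 0 ((C + A * M₂ * W₂) i j)]
      exact abs_max_sub_max_le_abs _ _ _
    refine le_trans h1 ?_
    have h2 : (C + A * M₁ * W₂) i j - (C + A * M₂ * W₂) i j
        = (A * (M₁ - M₂) * W₂) i j := by
      simp [Matrix.add_apply, Matrix.mul_sub, Matrix.sub_mul, Matrix.sub_apply]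
    rw [h2]
    have hAD : ∀ q, |(A * (M₁ - M₂)) i q| ≤ dmax * B := by
      intro q
      rw [Matrix.mul_apply]
      calc |∑ k, A i k * (M₁ - M₂) k q| ≤ ∑ k, |A i k * (M₁ - M₂) k q| :=
            Finset.abs_sum_le_sum_abs _ _
        _ ≤ ∑ k, A i k * B := by
            apply Finset.sum_le_sum
            intro k _
            rw [abs_mul, abs_of_nonneg (hAnn i k)]
            exact mul_le_mul_of_nonneg_left (hMB k q) (hAnn i k)
        _ = (∑ k, A i k) * B := by rw [← Finset.sum_mul]
        _ ≤ dmax * B := mul_le_mul_of_nonneg_right (hrow i) hB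
    calc |(A * (M₁ - M₂) * W₂) i j| = |∑ q, (A * (M₁ - M₂)) i q * W₂ q j| := by
          rw [Matrix.mul_apply]
      _ ≤ ∑ q, |(A * (M₁ - M₂)) i q * W₂ q j| := Finset.abs_sum_le_sum_abs _ _
      _ ≤ ∑ q, (dmax * B) * W₂ q j := by
          apply Finset.sum_le_sum
          intro q _
          rw [abs_mul, abs_of_nonneg (hW₂nonneg q j)]
          exact mul_le_mul_of_nonneg_right (hAD q) (hW₂nonneg q j)
      _ = (dmax * B) * ∑ q, W₂ q j := by rw [← Finset.mul_sum]
      _ ≤ (dmax * B) * supW := by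
          exact mul_le_mul_of_nonneg_left (hcol_le j) (mul_nonneg hdpos.le hB)
      _ = K * B := by rw [hK]; ring
  refine ⟨hK1, ?_, ?_⟩
  · -- contraction in the iSup norm
    intro M₁ M₂
    set B : ℝ := ⨆ i, ⨆ j, |(M₁ - M₂) i j| with hBdef
    have hentry_le : ∀ k q, |(M₁ - M₂) k q| ≤ B := by
      intro k q
      exact le_trans
        (le_ciSup (f := fun q => |(M₁ - M₂) k q|) (Set.Finite.bddAbove (Set.finite_range _)) q)
        (le_ciSup (f := fun i => ⨆ j, |(M₁ - M₂) i j|)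
          (Set.Finite.bddAbove (Set.finite_range _)) k)
    have hB : 0 ≤ B := by
      rcases isEmpty_or_nonempty (Fin d') with hd | hd
      · apply Real.iSup_nonneg
        intro i
        rw [Real.iSup_of_isEmpty]
      · obtain ⟨j⟩ := hd
        obtain ⟨i⟩ := hn
        exact le_trans (abs_nonneg _) (hentry_le i j)
    have hb : ∀ k q, |M₁ k q - M₂ k q| ≤ B := by
      intro k q; have := hentry_le k q; rwa [Matrix.sub_apply] at this
    apply ciSup_le
    intro i
    rcases isEmpty_or_nonempty (Fin d') with hd | hd
    · rw [Real.iSup_of_isEmpty]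
      exact mul_nonneg hKnn hB
    · apply ciSup_le
      intro j
      rw [Matrix.sub_apply]
      exact key B hB M₁ M₂ hb i j
  · -- unique fixed point via Banach
    let F' : (Fin n → Fin d' → ℝ) → (Fin n → Fin d' → ℝ) := F
    have hlip : LipschitzWith (Real.toNNReal K) F' := by
      apply LipschitzWith.of_dist_le_mul
      intro M₁ M₂
      have hcoe : ((Real.toNNReal K : NNReal) : ℝ) = K := Real.coe_toNNReal K hKnn
      rw [hcoe]
      have hd : 0 ≤ K * dist M₁ M₂ := mul_nonneg hKnn dist_nonneg
      rw [dist_pi_le_iff hd]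
      intro i
      rw [dist_pi_le_iff hd]
      intro j
      rw [Real.dist_eq]
      show |F M₁ i j - F M₂ i j| ≤ K * dist M₁ M₂
      apply key (dist M₁ M₂) dist_nonneg M₁ M₂ _ i j
      intro k q
      have h1 : dist (M₁ k q) (M₂ k q) ≤ dist (M₁ k) (M₂ k) := dist_le_pi_dist _ _ q
      have h2 : dist (M₁ k) (M₂ k) ≤ dist M₁ M₂ := dist_le_pi_dist _ _ k
      rw [Real.dist_eq] at h1
      exact le_trans h1 h2
    have hcontr : ContractingWith (Real.toNNReal K) F' :=
      ⟨Real.toNNReal_lt_one.mpr hK1, hlip⟩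
    obtain ⟨Mfix, hfp, huniq⟩ :
        ∃ M : Fin n → Fin d' → ℝ, F' M = M ∧
          ∀ M' : Fin n → Fin d' → ℝ, F' M' = M' → M' = M :=
      ⟨hcontr.fixedPoint F', hcontr.fixedPoint_isFixedPt,
        fun M' hM' => hcontr.fixedPoint_unique hM'⟩
    exact ⟨Mfix, hfp.symm, fun M hM => huniq M hM.symm⟩
end

section
/- Let A ∈ {0,1}^{n×n} be the adjacency matrix of a finite graph in which every node has positive degree and D its degree matrix. Let C_s, C_t ∈ {0,1}^{m×n} be arbitrary fixed matrices (the source and target incidence matrices of the m edges), X ∈ ℝ^{n×d}, X^{(e)} ∈ ℝ^{m×d_e}, and let W₁ ∈ ℝ^{d_e×d'}, W₂, W₃ ∈ ℝ^{d'×d'}, W₄ ∈ ℝ^{d×d'}, and W₅ ∈ ℝ^{d'×d'} with W₅ entrywise nonnegative and every column sum of W₅ strictly less than 1. Then there exists a unique pair (X̃, X̃^{(e)}) ∈ ℝ^{n×d'} × ℝ^{m×d'} satisfying the edge2vec system X̃ = X W₄ + D^{-1} A X̃ W₅ and X̃^{(e)} = X^{(e)} W₁ + C_s X̃ W₂ +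 C_t X̃ W₃. -/
open Matrix BigOperators

/-- The edge2vec system
`X̃ = X W₄ + D⁻¹ A X̃ W₅`, `X̃⁽ᵉ⁾ = X⁽ᵉ⁾ W₁ + C_s X̃ W₂ + C_t X̃ W₃`
has a unique solution pair when `W₅` is nonnegative with column sums `< 1`. -/
theorem edge2vec_unique_solution
    {n m d de d' : ℕ}
    (A : Matrix (Fin n) (Fin n) ℝ)
    (hA01 : ∀ i j, A i j = 0 ∨ A i j = 1)
    (hdeg : ∀ i, 0 < ∑ j, A i j)
    (Cs Ct : Matrix (Fin m) (Fin n) ℝ)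
    (hCs01 : ∀ i j, Cs i j = 0 ∨ Cs i j = 1)
    (hCt01 : ∀ i j, Ct i j = 0 ∨ Ct i j = 1)
    (X : Matrix (Fin n) (Fin d) ℝ)
    (Xe : Matrix (Fin m) (Fin de) ℝ)
    (W₁ : Matrix (Fin de) (Fin d') ℝ)
    (W₂ W₃ : Matrix (Fin d') (Fin d') ℝ)
    (W₄ : Matrix (Fin d) (Fin d') ℝ)
    (W₅ : Matrix (Fin d') (Fin d') ℝ)
    (hW₅nonneg : ∀ q j, 0 ≤ W₅ q j)
    (hW₅col : ∀ j, ∑ q, W₅ q j < 1) :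
    ∃! p : Matrix (Fin n) (Fin d') ℝ × Matrix (Fin m) (Fin d') ℝ,
      p.1 = X * W₄ + (Matrix.diagonal fun i => (∑ j, A i j)⁻¹) * A * p.1 * W₅ ∧
      p.2 = Xe * W₁ + Cs * p.1 * W₂ + Ct * p.1 * W₃ := by
  set P : Matrix (Fin n) (Fin n) ℝ :=
    (Matrix.diagonal fun i => (∑ j, A i j)⁻¹) * A with hPdef
  have hPentry : ∀ i k, P i k = (∑ j, A i j)⁻¹ * A i k := by
    intro i k
    simp [hPdef, Matrix.diagonal_mul]
  have hPnn : ∀ i k, 0 ≤ P i k := by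
    intro i k
    rw [hPentry]
    have hAnn : 0 ≤ A i k := by rcases hA01 i k with h | h <;> simp [h]
    exact mul_nonneg (inv_nonneg.mpr (hdeg i).le) hAnn
  have hProw : ∀ i, ∑ k, P i k = 1 := by
    intro i
    simp only [hPentry]
    rw [← Finset.mul_sum, inv_mul_cancel₀ (hdeg i).ne']
  -- the linear map Y ↦ P Y W₅
  set L : Matrix (Fin n) (Fin d') ℝ →ₗ[ℝ] Matrix (Fin n) (Fin d') ℝ :=
    { toFun := fun Y => P * Y * W₅
      map_add' := fun Y Z => by simp [Matrix.mul_add, Matrix.add_mul]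
      map_smul' := fun c Y => by simp [Matrix.mul_smul, Matrix.smul_mul] } with hLdef
  set T : Matrix (Fin n) (Fin d') ℝ →ₗ[ℝ] Matrix (Fin n) (Fin d') ℝ := 1 - L with hTdef
  have hTapp : ∀ Y : Matrix (Fin n) (Fin d') ℝ, T Y = Y - P * Y * W₅ := by
    intro Y; simp [hTdef, hLdef, LinearMap.sub_apply]
  have hker : ∀ Y : Matrix (Fin n) (Fin d') ℝ, T Y = 0 → Y = 0 := by
    intro Y hY
    rw [hTapp] at hY
    have hfix : Y = P * Y * W₅ := sub_eq_zero.mp hY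
    by_cases hne : Nonempty (Fin n × Fin d')
    · obtain ⟨⟨i, j⟩, -, hmax⟩ := Finset.exists_max_image (Finset.univ : Finset (Fin n × Fin d'))
        (fun p => |Y p.1 p.2|) (Finset.univ_nonempty)
      set M := |Y i j| with hM
      have hMnn : 0 ≤ M := abs_nonneg _
      have hle : ∀ k q, |Y k q| ≤ M := fun k q => hmax (k, q) (Finset.mem_univ _)
      have hbound : M ≤ M * ∑ q, W₅ q j := by
        calc M = |∑ q, (∑ k, P i k * Y k q) * W₅ q j| := by
              rw [hM]; nth_rewrite 1 [hfix]; simp [Matrix.mul_apply]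
        _ ≤ ∑ q, |(∑ k, P i k * Y k q) * W₅ q j| := Finset.abs_sum_le_sum_abs _ _
        _ ≤ ∑ q, (∑ k, P i k * M) * W₅ q j := by
              apply Finset.sum_le_sum
              intro q _
              rw [abs_mul, abs_of_nonneg (hW₅nonneg q j)]
              apply mul_le_mul_of_nonneg_right _ (hW₅nonneg q j)
              calc |∑ k, P i k * Y k q| ≤ ∑ k, |P i k * Y k q| :=
                    Finset.abs_sum_le_sum_abs _ _
              _ ≤ ∑ k, P i k * M := by
                    apply Finset.sum_le_sum
                    intro k _
                    rw [abs_mul, abs_of_nonneg (hPnn i k)]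
                    exact mul_le_mul_of_nonneg_left (hle k q) (hPnn i k)
        _ = M * ∑ q, W₅ q j := by
              rw [← Finset.sum_mul, hProw, one_mul, Finset.mul_sum]
      have hM0 : M = 0 := by
        by_contra h
        have hMpos : 0 < M := lt_of_le_of_ne hMnn (Ne.symm h)
        have := (mul_lt_mul_of_pos_left (hW₅col j) hMpos)
        rw [mul_one] at this
        linarith
      ext k q
      have := hle k q
      rw [hM0] at this
      simpa using abs_nonpos_iff.mp this
    · ext k q
      exact absurd ⟨k, q⟩ hne
  have hinj : Function.Injective T :=
    LinearMap.ker_eq_bot.mp (LinearMap.ker_eq_bot'.mpr hker)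
  have hsurj : Function.Surjective T :=
    (LinearMap.injective_iff_surjective).mp hinj
  obtain ⟨Y₀, hY₀⟩ := hsurj (X * W₄)
  have hfix : Y₀ = X * W₄ + P * Y₀ * W₅ := by
    have h1 : Y₀ - P * Y₀ * W₅ = X * W₄ := by rw [← hTapp]; exact hY₀
    linear_combination (norm := module) h1
  refine ⟨(Y₀, Xe * W₁ + Cs * Y₀ * W₂ + Ct * Y₀ * W₃), ⟨hfix, rfl⟩, ?_⟩
  rintro ⟨Z, Ze⟩ ⟨h1, h2⟩
  simp only at h1 h2
  have hZ : Z = Y₀ := by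
    have : T (Z - Y₀) = 0 := by
      rw [hTapp, Matrix.mul_sub, Matrix.sub_mul]
      nth_rewrite 1 [h1]
      nth_rewrite 1 [hfix]
      abel
    have := hker _ this
    exact sub_eq_zero.mp this
  subst hZ
  exact Prod.ext rfl h2
end

section
/- Let A ∈ {0,1}^{n×n} be the adjacency matrix of a finite graph in which every node has positive degree, D its degree matrix, L ∈ ℝ^{n×d'} any matrix, and W₂, W₅, W₆, W₇ ∈ ℝ^{d'×d'}. If the combined matrix M = W₅ + W₂W₆ + W₂W₇ is entrywise nonnegative and every column sum of M is strictly less than 1 (i.e. max{Mᵀ𝐞} < 1), then there exists a unique X̃ ∈ ℝ^{n×d'} satisfying the combined edge-feature propagation equation X̃ = L + D^{-1} A X̃ (W₅ + W₂W₆ + W₂W₇). -/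
open Matrix BigOperators

/-- If the combined matrix `M = W₅ + W₂ W₆ + W₂ W₇` is entrywise nonnegative
with every column sum strictly less than 1, then the combined edge-feature propagation
equation `X̃ = L + D⁻¹ A X̃ (W₅ + W₂ W₆ + W₂ W₇)` has a unique solution. -/
theorem combined_edge_feature_propagation_unique_solution
    {n d' : ℕ}
    (A : Matrix (Fin n) (Fin n) ℝ)
    (hA01 : ∀ i j, A i j = 0 ∨ A i j = 1)
    (hdeg : ∀ i, 0 < ∑ j, A i j)
    (L : Matrix (Fin n) (Fin d') ℝ)
    (W₂ W₅ W₆ W₇ : Matrix (Fin d') (Fin d') ℝ)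
    (hMnonneg : ∀ q j, 0 ≤ (W₅ + W₂ * W₆ + W₂ * W₇) q j)
    (hMcol : ∀ j, ∑ q, (W₅ + W₂ * W₆ + W₂ * W₇) q j < 1) :
    ∃! Xt : Matrix (Fin n) (Fin d') ℝ,
      Xt = L + (Matrix.diagonal fun i => (∑ j, A i j)⁻¹) * A * Xt
              * (W₅ + W₂ * W₆ + W₂ * W₇) := by
  set M : Matrix (Fin d') (Fin d') ℝ := W₅ + W₂ * W₆ + W₂ * W₇ with hM
  set P : Matrix (Fin n) (Fin n) ℝ :=
    (Matrix.diagonal fun i => (∑ j, A i j)⁻¹) * A with hP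
  have hPentry : ∀ i k, P i k = (∑ j, A i j)⁻¹ * A i k := by
    intro i k
    simp [hP, Matrix.diagonal_mul]
  have hPnn : ∀ i k, 0 ≤ P i k := by
    intro i k
    rw [hPentry]
    apply mul_nonneg (inv_nonneg.2 (hdeg i).le)
    rcases hA01 i k with h | h <;> simp [h]
  have hProw : ∀ i, ∑ k, P i k = 1 := by
    intro i
    simp only [hPentry]
    rw [← Finset.mul_sum, inv_mul_cancel₀ (hdeg i).ne']
  clear_value M P
  -- the linear map X ↦ X - P * X * M
  let g : Matrix (Fin n) (Fin d') ℝ →ₗ[ℝ] Matrix (Fin n) (Fin d') ℝ :=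
    { toFun := fun X => P * X * M
      map_add' := fun x y => by
        show P * (x + y) * M = P * x * M + P * y * M
        rw [Matrix.mul_add, Matrix.add_mul]
      map_smul' := fun c x => by
        show P * (c • x) * M = c • (P * x * M)
        rw [Matrix.mul_smul, Matrix.smul_mul] }
  let f : Matrix (Fin n) (Fin d') ℝ →ₗ[ℝ] Matrix (Fin n) (Fin d') ℝ :=
    LinearMap.id - g
  have hker : ∀ X : Matrix (Fin n) (Fin d') ℝ, f X = 0 → X = 0 := by
    intro X hX
    have hfix : X = P * X * M := by
      have : X - P * X * M = 0 := hX
      have := sub_eq_zero.mp this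
      exact this
    rcases isEmpty_or_nonempty (Fin n) with hn | hn
    · ext i j; exact isEmptyElim i
    rcases isEmpty_or_nonempty (Fin d') with hd | hd
    · ext i j; exact isEmptyElim j
    obtain ⟨p0, -, hmax⟩ := Finset.exists_max_image (Finset.univ : Finset (Fin n × Fin d'))
      (fun p => |X p.1 p.2|) Finset.univ_nonempty
    obtain ⟨i0, j0⟩ := p0
    set C : ℝ := |X i0 j0| with hC
    have hCnn : 0 ≤ C := abs_nonneg _
    have hCle : ∀ i j, |X i j| ≤ C := fun i j => hmax (i, j) (Finset.mem_univ _)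
    set s : ℝ := ∑ q, M q j0 with hs
    have hslt : s < 1 := hMcol j0
    have hbound : C ≤ C * s := by
      have h1 : X i0 j0 = ∑ q, (∑ k, P i0 k * X k q) * M q j0 := by
        conv_lhs => rw [hfix]
        simp [Matrix.mul_apply]
      calc C = |∑ q, (∑ k, P i0 k * X k q) * M q j0| := by rw [hC, h1]
        _ ≤ ∑ q, |(∑ k, P i0 k * X k q) * M q j0| := Finset.abs_sum_le_sum_abs _ _
        _ ≤ ∑ q, C * M q j0 := by
            apply Finset.sum_le_sum
            intro q _
            rw [abs_mul, abs_of_nonneg (hMnonneg q j0)]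
            apply mul_le_mul_of_nonneg_right _ (hMnonneg q j0)
            calc |∑ k, P i0 k * X k q| ≤ ∑ k, |P i0 k * X k q| :=
                  Finset.abs_sum_le_sum_abs _ _
              _ ≤ ∑ k, P i0 k * C := by
                  apply Finset.sum_le_sum
                  intro k _
                  rw [abs_mul, abs_of_nonneg (hPnn i0 k)]
                  exact mul_le_mul_of_nonneg_left (hCle k q) (hPnn i0 k)
              _ = C := by rw [← Finset.sum_mul, hProw, one_mul]
        _ = C * s := by rw [hs, Finset.mul_sum]
    have hC0 : C ≤ 0 := by nlinarith
    ext i j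
    have := hCle i j
    have : |X i j| ≤ 0 := le_trans this hC0
    simpa using le_antisymm this (abs_nonneg _)
  have hinj : Function.Injective f := by
    rw [← LinearMap.ker_eq_bot, LinearMap.ker_eq_bot']
    intro X hX
    exact hker X hX
  have hsurj : Function.Surjective f :=
    (LinearMap.injective_iff_surjective).mp hinj
  obtain ⟨X, hXeq⟩ := hsurj L
  have hXsol : X = L + P * X * M := by
    have h : X - P * X * M = L := hXeq
    exact sub_eq_iff_eq_add.mp h
  refine ⟨X, hXsol, ?_⟩
  intro Y hY
  apply hinj
  have h1 : f Y = L := by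
    show Y - P * Y * M = L
    exact sub_eq_iff_eq_add.mpr hY
  rw [h1, hXeq]
end
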